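/- arXiv:1612.09003 — 2 statements merged into one kernel-verified Lean document; each statement's English description precedes it below -/
import Mathlib

section
/- Let m and n be positive integers with n ≥ m, and let u, v, and w be (possibly empty) words all of whose letters lie in {1, …, m}. Then the words u·m·v·n·w and u·n·v·m·w (where m and n denote single letters) are shift equivalent; in fact u·n·v·m·w is a single rigid shift of u·m·v·n·w at height m. -/
/-- The `n`-th letter (1-indexed) of a word `u`, with the convention that
letters outside the range `{1, …, |u|}` are `0`. -/
def letter (u : List ℕ) (n : ℤ) : ℕ :=
  if 1 ≤ n then u.getD (n - 1).toNat 0 else 0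

/-- A word over the positive integers: every letter is positive. -/
def IsWord (w : List ℕ) : Prop := ∀ x ∈ w, 0 < x

/-- `u` embeds in `w` at (1-indexed) position `i`:
`1 ≤ i ≤ |w| - |u| + 1` and `u_j ≤ w_{i+j-1}` for all `1 ≤ j ≤ |u|`. -/
def EmbedsAt (u w : List ℕ) (i : ℕ) : Prop :=
  1 ≤ i ∧ i + u.length ≤ w.length + 1 ∧
    ∀ j ∈ Finset.Icc 1 u.length, letter u (j : ℤ) ≤ letter w ((i : ℤ) + (j : ℤ) - 1)

instance (u w : List ℕ) : DecidablePred (EmbedsAt u w) := fun i => by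
  unfold EmbedsAt; infer_instance

/-- `η_u(w)`: the number of positions at which `u` embeds in `w`. -/
def eta (u w : List ℕ) : ℕ :=
  ((Finset.Icc 1 (w.length + 1 - u.length)).filter (EmbedsAt u w)).card

/-- Strong Wilf equivalence: for all `n m j`, the number of words of length `n`,
sum `m`, and exactly `j` embeddings of `u` equals that for `v`. -/
def StronglyWilfEquiv (u v : List ℕ) : Prop :=
  ∀ n m j : ℕ,
    {w : List ℕ | IsWord w ∧ w.length = n ∧ w.sum = m ∧ eta u w = j}.ncard =
    {w : List ℕ | IsWord w ∧ w.length = n ∧ w.sum = m ∧ eta v w = j}.ncard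

/-- `w` avoids `u`: there is no position at which `u` embeds in `w`. -/
def Avoids (u w : List ℕ) : Prop := ∀ i : ℕ, ¬ EmbedsAt u w i

/-- Wilf equivalence: for all `n m`, the number of words of length `n` and
sum `m` avoiding `u` equals that for `v`. -/
def WilfEquiv (u v : List ℕ) : Prop :=
  ∀ n m : ℕ,
    {w : List ℕ | IsWord w ∧ w.length = n ∧ w.sum = m ∧ Avoids u w}.ncard =
    {w : List ℕ | IsWord w ∧ w.length = n ∧ w.sum = m ∧ Avoids v w}.ncard

/-- `v` is the rigid shift of `u` at height `h ≥ 1` by the integer `k`. -/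
def IsRigidShift (u v : List ℕ) (h : ℕ) (k : ℤ) : Prop :=
  1 ≤ h ∧ v.length = u.length ∧
  (∀ n : ℤ, h < letter u n → 1 ≤ n + k ∧ n + k ≤ (u.length : ℤ) ∧ h ≤ letter u (n + k)) ∧
  (∀ n : ℤ, 1 ≤ n → n ≤ (v.length : ℤ) →
    letter v n = min h (letter u n) + (letter u (n - k) - h))

/-- Shift equivalence: the smallest equivalence relation relating every word to
its reversal and to each of its rigid shifts. -/
def ShiftEquiv (u v : List ℕ) : Prop :=
  Relation.EqvGen (fun a b => b = a.reverse ∨ ∃ (h : ℕ) (k : ℤ), IsRigidShift a b h k) u v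


lemma getD_le {m : ℕ} {l : List ℕ} (h : ∀ z ∈ l, z ≤ m) (i : ℕ) : l.getD i 0 ≤ m := by
  rcases lt_or_ge i l.length with hi | hi
  · rw [List.getD_eq_getElem _ _ hi]; exact h _ (List.getElem_mem hi)
  · rw [List.getD_eq_default _ _ hi]; exact Nat.zero_le m

lemma getD_mid (u v w : List ℕ) (x y : ℕ) (i : ℕ) :
    (u ++ [x] ++ v ++ [y] ++ w).getD i 0 =
      if i < u.length then u.getD i 0
      else if i = u.length then x
      else if i < u.length + v.length + 1 then v.getD (i - u.length - 1) 0
      else if i = u.length + v.length + 1 then y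
      else w.getD (i - u.length - v.length - 2) 0 := by
  simp only [List.getD_eq_getElem?_getD, List.append_assoc]
  rcases lt_or_ge i u.length with h | h
  · rw [List.getElem?_append_left h]; simp [h]
  · rw [List.getElem?_append_right h]
    rcases Nat.eq_or_lt_of_le h with h1 | h1
    · rw [if_neg (by omega), if_pos (by omega)]
      have h0 : i - u.length = 0 := by omega
      rw [h0]; simp
    · have h2 : 1 ≤ i - u.length := by omega
      rw [show ([x] ++ (v ++ ([y] ++ w)))[i - u.length]? =
          (v ++ ([y] ++ w))[i - u.length - 1]? from List.getElem?_append_right h2]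
      rcases lt_or_ge (i - u.length - 1) v.length with h3 | h3
      · rw [List.getElem?_append_left h3]
        rw [if_neg (by omega), if_neg (by omega), if_pos (by omega)]
      · rw [List.getElem?_append_right h3]
        rcases Nat.eq_or_lt_of_le h3 with h4 | h4
        · rw [if_neg (by omega), if_neg (by omega), if_neg (by omega), if_pos (by omega)]
          have h0 : i - u.length - 1 - v.length = 0 := by omega
          rw [h0]; simp
        · have h5 : 1 ≤ i - u.length - 1 - v.length := by omega
          rw [show ([y] ++ w)[i - u.length - 1 - v.length]? =
              w[i - u.length - 1 - v.length - 1]? from List.getElem?_append_right h5]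
          rw [if_neg (by omega), if_neg (by omega), if_neg (by omega), if_neg (by omega)]
          congr 2
          omega

lemma letter_mid (u v w : List ℕ) (x y : ℕ) (p : ℤ) (hp : 1 ≤ p) :
    letter (u ++ [x] ++ v ++ [y] ++ w) p =
      if (p - 1).toNat < u.length then u.getD (p - 1).toNat 0
      else if (p - 1).toNat = u.length then x
      else if (p - 1).toNat < u.length + v.length + 1 then v.getD ((p - 1).toNat - u.length - 1) 0
      else if (p - 1).toNat = u.length + v.length + 1 then y
      else w.getD ((p - 1).toNat - u.length - v.length - 2) 0 := by
  rw [letter, if_pos hp, getD_mid]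

lemma letter_at_x (u v w : List ℕ) (x y : ℕ) :
    letter (u ++ [x] ++ v ++ [y] ++ w) ((u.length : ℤ) + 1) = x := by
  rw [letter_mid _ _ _ _ _ _ (by omega)]
  rw [if_neg (by omega), if_pos (by omega)]

lemma letter_at_y (u v w : List ℕ) (x y : ℕ) :
    letter (u ++ [x] ++ v ++ [y] ++ w) ((u.length : ℤ) + v.length + 2) = y := by
  rw [letter_mid _ _ _ _ _ _ (by omega)]
  rw [if_neg (by omega), if_neg (by omega), if_neg (by omega), if_pos (by omega)]

lemma letter_le {m : ℕ} (u v w : List ℕ) (x y : ℕ)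
    (hu : ∀ z ∈ u, z ≤ m) (hv : ∀ z ∈ v, z ≤ m) (hw : ∀ z ∈ w, z ≤ m) (hx : x ≤ m)
    (p : ℤ) (hp : p ≠ (u.length : ℤ) + v.length + 2) :
    letter (u ++ [x] ++ v ++ [y] ++ w) p ≤ m := by
  rcases lt_or_ge p 1 with h | h
  · rw [letter, if_neg (by omega)]; exact Nat.zero_le m
  · rw [letter_mid _ _ _ _ _ _ h]
    split_ifs with h1 h2 h3 h4
    · exact getD_le hu _
    · exact hx
    · exact getD_le hv _
    · omega
    · exact getD_le hw _

lemma letter_agree (u v w : List ℕ) (x y x' y' : ℕ) (p : ℤ)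
    (h1 : p ≠ (u.length : ℤ) + 1) (h2 : p ≠ (u.length : ℤ) + v.length + 2) :
    letter (u ++ [x] ++ v ++ [y] ++ w) p = letter (u ++ [x'] ++ v ++ [y'] ++ w) p := by
  rcases lt_or_ge p 1 with h | h
  · rw [letter, letter, if_neg (by omega), if_neg (by omega)]
  · rw [letter_mid _ _ _ _ _ _ h, letter_mid _ _ _ _ _ _ h]
    split_ifs with a1 a2 a3 a4 <;> first | rfl | omega

/-- For `n ≥ m ≥ 1` and words `u, v, w` with letters in
`{1, …, m}`, the words `u·m·v·n·w` and `u·n·v·m·w` are shift equivalent;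
in fact the latter is a single rigid shift of the former at height `m`. -/
theorem umvnw_shiftEquiv_unvmw (m n : ℕ) (hm : 1 ≤ m) (hmn : m ≤ n)
    (u v w : List ℕ)
    (hu : ∀ x ∈ u, 1 ≤ x ∧ x ≤ m) (hv : ∀ x ∈ v, 1 ≤ x ∧ x ≤ m)
    (hw : ∀ x ∈ w, 1 ≤ x ∧ x ≤ m) :
    ShiftEquiv (u ++ [m] ++ v ++ [n] ++ w) (u ++ [n] ++ v ++ [m] ++ w) ∧
    ∃ k : ℤ, IsRigidShift (u ++ [m] ++ v ++ [n] ++ w)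
      (u ++ [n] ++ v ++ [m] ++ w) m k := by
  
  have hu' : ∀ z ∈ u, z ≤ m := fun z hz => (hu z hz).2
  have hv' : ∀ z ∈ v, z ≤ m := fun z hz => (hv z hz).2
  have hw' : ∀ z ∈ w, z ≤ m := fun z hz => (hw z hz).2
  set a : ℕ := u.length with ha
  set b : ℕ := v.length with hb
  have hrig : IsRigidShift (u ++ [m] ++ v ++ [n] ++ w)
      (u ++ [n] ++ v ++ [m] ++ w) m (-(b + 1 : ℤ)) := by
    refine ⟨hm, by simp, ?_, ?_⟩
    · intro p hp
      have hp2 : p = (a : ℤ) + b + 2 := by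
        by_contra hne
        exact absurd hp (not_lt.2 (letter_le u v w m n hu' hv' hw' le_rfl p hne))
      subst hp2
      have : (a : ℤ) + b + 2 + -(b + 1 : ℤ) = (a : ℤ) + 1 := by ring
      rw [this]
      refine ⟨by omega, ?_, ?_⟩
      · simp only [List.length_append, List.length_singleton]
        push_cast
        omega
      · rw [letter_at_x]
    · intro p hp1 hp2
      have hsub : p - -(b + 1 : ℤ) = p + b + 1 := by ring
      rw [hsub]
      rcases eq_or_ne p ((a : ℤ) + 1) with rfl | hpa
      · rw [letter_at_x, letter_at_x,
          show (a : ℤ) + 1 + b + 1 = (a : ℤ) + b + 2 by ring, letter_at_y]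
        omega
      · rcases eq_or_ne p ((a : ℤ) + b + 2) with rfl | hpb
        · rw [letter_at_y, letter_at_y]
          have hle : letter (u ++ [m] ++ v ++ [n] ++ w) ((a : ℤ) + b + 2 + b + 1) ≤ m :=
            letter_le u v w m n hu' hv' hw' le_rfl _ (by omega)
          omega
        · rw [letter_agree u v w n m m n p hpa hpb]
          have hle : letter (u ++ [m] ++ v ++ [n] ++ w) p ≤ m :=
            letter_le u v w m n hu' hv' hw' le_rfl p hpb
          have hle2 : letter (u ++ [m] ++ v ++ [n] ++ w) (p + b + 1) ≤ m :=
            letter_le u v w m n hu' hv' hw' le_rfl _ (by omega)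
          omega
  exact ⟨Relation.EqvGen.rel _ _ (Or.inr ⟨m, _, hrig⟩), ⟨_, hrig⟩⟩
end

section
/- Let u be a nonempty word, let m ≥ 1, and let 1 = i_1 < ⋯ < i_m be positions with i_{j+1} ≤ i_j + |u| − 1 for all 1 ≤ j < m. For each word w of length i_m + |u| − 1 such that u embeds in w at each position i_1, …, i_m, and which is minimal in the sense that no letter of w can be decreased (by 1, staying positive) while preserving all these embeddings, w is uniquely determined: w_n = max_{1≤j≤m} u_{n−i_j+1} for all n (with the convention u_t = 0 for t ∉ {1,…,|u|}). -/
lemma letter_eq_getD (w : List ℕ) (n : ℕ) (h1 : 1 ≤ n) :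
    letter w (n : ℤ) = w.getD (n - 1) 0 := by
  unfold letter
  rw [if_pos (by exact_mod_cast h1)]
  congr 1
  omega

lemma letter_zero_of_gt (u : List ℕ) (t : ℤ) (ht : (u.length : ℤ) < t) : letter u t = 0 := by
  unfold letter
  split
  · exact List.getD_eq_default _ _ (by omega)
  · rfl

lemma letter_zero_of_lt (u : List ℕ) (t : ℤ) (ht : t < 1) : letter u t = 0 := by
  unfold letter; rw [if_neg (by omega)]

lemma letter_pos (w : List ℕ) (hw : ∀ x ∈ w, 0 < x) (n : ℕ) (h1 : 1 ≤ n) (h2 : n ≤ w.length) :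
    0 < letter w (n : ℤ) := by
  rw [letter_eq_getD w n h1]
  rw [List.getD_eq_getElem w 0 (by omega)]
  exact hw _ (List.getElem_mem _)

lemma letter_set (w : List ℕ) (n x t : ℕ) (h1 : 1 ≤ t) (h2 : t ≤ w.length) (hn : 1 ≤ n) :
    letter (w.set (n - 1) x) (t : ℤ) = if t = n then x else letter w (t : ℤ) := by
  rw [letter_eq_getD _ t h1, letter_eq_getD w t h1]
  rw [List.getD_eq_getElem _ 0 (by simpa using (by omega : t - 1 < w.length)),
      List.getD_eq_getElem w 0 (by omega)]
  rw [List.getElem_set]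
  by_cases h : t = n
  · simp [h]
  · rw [if_neg (by omega), if_neg h]

lemma cover_lemma (m : ℕ) (hm : 1 ≤ m) (i : ℕ → ℕ) (hi1 : i 1 = 1) (L : ℕ) (hL : 1 ≤ L)
    (hoverlap : ∀ j, 1 ≤ j → j < m → i (j + 1) ≤ i j + L - 1)
    (n : ℕ) (h1 : 1 ≤ n) (h2 : n ≤ i m + L - 1) :
    ∃ j, 1 ≤ j ∧ j ≤ m ∧ i j ≤ n ∧ n ≤ i j + L - 1 := by
  classical
  set S := (Finset.Icc 1 m).filter (fun j => i j ≤ n) with hS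
  have h1S : (1 : ℕ) ∈ S := by
    simp [hS, hi1, hm, h1]
  have hne : S.Nonempty := ⟨1, h1S⟩
  obtain ⟨hj1, hjm, hjn⟩ : 1 ≤ S.max' hne ∧ S.max' hne ≤ m ∧ i (S.max' hne) ≤ n := by
    have hmem := S.max'_mem hne
    rw [Finset.mem_filter, Finset.mem_Icc] at hmem
    exact ⟨hmem.1.1, hmem.1.2, hmem.2⟩
  set j := S.max' hne
  by_cases hjem : j = m
  · exact ⟨j, hj1, hjm, hjn, hjem ▸ h2⟩
  · have hjltm : j < m := lt_of_le_of_ne hjm hjem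
    have hnlt : n < i (j + 1) := by
      by_contra hc
      have hmem : j + 1 ∈ S := by
        rw [Finset.mem_filter, Finset.mem_Icc]; omega
      have := S.le_max' _ hmem
      omega
    have := hoverlap j hj1 hjltm
    exact ⟨j, hj1, hjm, hjn, by omega⟩

/-- A minimal cluster of `u` with marked occurrences at positions
`1 = i_1 < ⋯ < i_m` (no letter can be decreased while keeping all letters
positive and preserving all marked embeddings) is uniquely determined:
`w_n = max_j u_{n-i_j+1}`. -/
theorem minimal_cluster_unique (u : List ℕ) (hu : IsWord u) (hL : 1 ≤ u.length)
    (m : ℕ) (hm : 1 ≤ m) (i : ℕ → ℕ) (hi1 : i 1 = 1)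
    (hmono : ∀ j, 1 ≤ j → j < m → i j < i (j + 1))
    (hoverlap : ∀ j, 1 ≤ j → j < m → i (j + 1) ≤ i j + u.length - 1)
    (w : List ℕ) (hw : IsWord w) (hwlen : w.length = i m + u.length - 1)
    (hemb : ∀ j ∈ Finset.Icc 1 m, EmbedsAt u w (i j))
    (hmin : ∀ n : ℕ, 1 ≤ n → n ≤ w.length →
      ¬ (IsWord (w.set (n - 1) (w.getD (n - 1) 0 - 1)) ∧
         ∀ j ∈ Finset.Icc 1 m, EmbedsAt u (w.set (n - 1) (w.getD (n - 1) 0 - 1)) (i j))) :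
    ∀ n : ℕ, 1 ≤ n → n ≤ w.length →
      letter w (n : ℤ) =
        (Finset.Icc 1 m).sup (fun j => letter u ((n : ℤ) - (i j : ℤ) + 1)) := by
  intro n hn1 hn2
  set M := (Finset.Icc 1 m).sup (fun j => letter u ((n : ℤ) - (i j : ℤ) + 1)) with hM
  have hMle : M ≤ letter w (n : ℤ) := by
    apply Finset.sup_le
    intro j hj
    have hjI := hj
    rw [Finset.mem_Icc] at hj
    obtain ⟨he1, he2, he3⟩ := hemb j hjI
    by_cases hrange : i j ≤ n ∧ n + 1 ≤ i j + u.length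
    · have hjr : n - i j + 1 ∈ Finset.Icc 1 u.length := by rw [Finset.mem_Icc]; omega
      have h3 := he3 _ hjr
      have hc1 : ((n - i j + 1 : ℕ) : ℤ) = (n : ℤ) - (i j : ℤ) + 1 := by push_cast; omega
      have hc2 : (i j : ℤ) + ((n - i j + 1 : ℕ) : ℤ) - 1 = (n : ℤ) := by push_cast; omega
      rw [hc2, hc1] at h3
      exact h3
    · rcases (by omega : (n : ℤ) - (i j : ℤ) + 1 < 1 ∨ (u.length : ℤ) < (n : ℤ) - (i j : ℤ) + 1) with h | h
      · rw [letter_zero_of_lt u _ h]; exact Nat.zero_le _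
      · rw [letter_zero_of_gt u _ h]; exact Nat.zero_le _
  by_contra hne
  have hlt : M < letter w (n : ℤ) := lt_of_le_of_ne hMle (Ne.symm hne)
  -- there is a window covering n
  obtain ⟨j0, hj01, hj0m, hj0le, hj0ge⟩ :=
    cover_lemma m hm i hi1 u.length hL hoverlap n hn1 (hwlen ▸ hn2)
  have hj0I : j0 ∈ Finset.Icc 1 m := Finset.mem_Icc.mpr ⟨hj01, hj0m⟩
  have hupos : 0 < letter u ((n : ℤ) - (i j0 : ℤ) + 1) := by
    have hc1 : ((n - i j0 + 1 : ℕ) : ℤ) = (n : ℤ) - (i j0 : ℤ) + 1 := by push_cast; omega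
    rw [← hc1]
    exact letter_pos u hu _ (by omega) (by omega)
  have hMpos : 0 < M := lt_of_lt_of_le hupos (Finset.le_sup (f := fun j => letter u ((n : ℤ) - (i j : ℤ) + 1)) hj0I)
  have hw2 : 2 ≤ letter w (n : ℤ) := by omega
  set c := w.getD (n - 1) 0 with hc
  have hcw : letter w (n : ℤ) = c := letter_eq_getD w n hn1
  apply hmin n hn1 hn2
  constructor
  · intro x hx
    rcases List.mem_or_eq_of_mem_set hx with h | h
    · exact hw x h
    · omega
  · intro j hj
    obtain ⟨he1, he2, he3⟩ := hemb j hj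
    refine ⟨he1, by rw [List.length_set]; exact he2, ?_⟩
    intro t ht
    have htI := ht
    rw [Finset.mem_Icc] at ht
    set pn := i j + t - 1 with hpn
    have hpn1 : 1 ≤ pn := by omega
    have hpn2 : pn ≤ w.length := by omega
    have hcp : (i j : ℤ) + (t : ℤ) - 1 = (pn : ℤ) := by push_cast; omega
    rw [hcp, letter_set w n (c - 1) pn hpn1 hpn2 hn1]
    by_cases hpe : pn = n
    · rw [if_pos hpe]
      have hct : (t : ℤ) = (n : ℤ) - (i j : ℤ) + 1 := by push_cast; omega
      have : letter u (t : ℤ) ≤ M := by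
        rw [hct]; exact Finset.le_sup (f := fun j => letter u ((n : ℤ) - (i j : ℤ) + 1)) hj
      omega
    · rw [if_neg hpe]
      have h3 := he3 t htI
      rw [hcp] at h3
      exact h3
end
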